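/- Let ℬ ≤ M(n,𝔽) be a matrix space such that every B ∈ ℬ is in block upper-triangular form with diagonal blocks of sizes n₁, …, n_d (with n₁ + ⋯ + n_d = n), and for each i ∈ [d] let 𝒞ᵢ ≤ M(nᵢ,𝔽) be the linear span of the i-th diagonal blocks of the matrices in ℬ. Then ℬ has a shrunk subspace if and only if there exists i ∈ [d] such that 𝒞ᵢ has a shrunk subspace. -/
import Mathlib

/-- The image `ℬ(U)` of a subspace `U` under a matrix space `ℬ` (general finite index type). -/
def matImage {𝔽 : Type*} [Field 𝔽] {ι : Type*} [Fintype ι]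
    (ℬ : Submodule 𝔽 (Matrix ι ι 𝔽)) (U : Submodule 𝔽 (ι → 𝔽)) : Submodule 𝔽 (ι → 𝔽) :=
  Submodule.span 𝔽 {v | ∃ B ∈ ℬ, ∃ u ∈ U, v = B.mulVec u}

/-- `ℬ` has a shrunk subspace if there is `U` with `dim(ℬ(U)) < dim U`. -/
def HasShrunk {𝔽 : Type*} [Field 𝔽] {ι : Type*} [Fintype ι]
    (ℬ : Submodule 𝔽 (Matrix ι ι 𝔽)) : Prop :=
  ∃ U : Submodule 𝔽 (ι → 𝔽), Module.finrank 𝔽 (matImage ℬ U) < Module.finrank 𝔽 U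

/-- The linear map extracting the `i`-th diagonal block of a block matrix indexed by
`(i : Fin d) × Fin (nsz i)`. -/
def diagBlock {𝔽 : Type*} [Field 𝔽] {d : ℕ} {nsz : Fin d → ℕ} (i : Fin d) :
    Matrix ((j : Fin d) × Fin (nsz j)) ((j : Fin d) × Fin (nsz j)) 𝔽 →ₗ[𝔽]
      Matrix (Fin (nsz i)) (Fin (nsz i)) 𝔽 where
  toFun B := fun a b => B ⟨i, a⟩ ⟨i, b⟩
  map_add' _ _ := rfl
  map_smul' _ _ := rfl

namespace BlockShrunkAux

variable {𝔽 : Type*} [Field 𝔽] {d : ℕ} {nsz : Fin d → ℕ}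

/-- Vectors vanishing on all blocks with index `≥ k`. -/
def Vnat (𝔽 : Type*) [Field 𝔽] {d : ℕ} (nsz : Fin d → ℕ) (k : ℕ) :
    Submodule 𝔽 ((j : Fin d) × Fin (nsz j) → 𝔽) where
  carrier := {v | ∀ p : (j : Fin d) × Fin (nsz j), k ≤ (p.1 : ℕ) → v p = 0}
  add_mem' := by intro a b ha hb p hp; simp [ha p hp, hb p hp]
  zero_mem' := by intro p hp; rfl
  smul_mem' := by intro c a ha p hp; simp [ha p hp]

lemma Vnat_mono {k l : ℕ} (h : k ≤ l) : Vnat 𝔽 nsz k ≤ Vnat 𝔽 nsz l := by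
  intro v hv p hp
  exact hv p (le_trans h hp)

lemma Vnat_zero : Vnat 𝔽 nsz 0 = ⊥ := by
  ext v
  simp only [Submodule.mem_bot]
  constructor
  · intro hv; funext p; exact hv p (Nat.zero_le _)
  · rintro rfl p _; rfl

lemma Vnat_top : Vnat 𝔽 nsz d = ⊤ := by
  ext v
  simp only [Submodule.mem_top, iff_true]
  intro p hp
  exact absurd p.1.isLt (not_lt.mpr hp)

/-- Projection to the `i`-th block. -/
def proj (𝔽 : Type*) [Field 𝔽] {d : ℕ} {nsz : Fin d → ℕ} (i : Fin d) :
    ((j : Fin d) × Fin (nsz j) → 𝔽) →ₗ[𝔽] (Fin (nsz i) → 𝔽) where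
  toFun v := fun a => v ⟨i, a⟩
  map_add' _ _ := rfl
  map_smul' _ _ := rfl

/-- Embedding of the `i`-th block. -/
def emb (𝔽 : Type*) [Field 𝔽] {d : ℕ} {nsz : Fin d → ℕ} (i : Fin d) :
    (Fin (nsz i) → 𝔽) →ₗ[𝔽] ((j : Fin d) × Fin (nsz j) → 𝔽) where
  toFun u := fun p => if h : p.1 = i then u (Fin.cast (congrArg nsz h) p.2) else 0
  map_add' u v := by funext p; by_cases h : p.1 = i <;> simp [h]
  map_smul' c u := by funext p; by_cases h : p.1 = i <;> simp [h]

lemma proj_emb (i : Fin d) (u : Fin (nsz i) → 𝔽) : proj 𝔽 i (emb 𝔽 i u) = u := by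
  funext a
  simp only [proj, emb, LinearMap.coe_mk, AddHom.coe_mk]
  rw [dif_pos trivial]
  exact congrArg u (Fin.ext rfl)

lemma emb_injective (i : Fin d) : Function.Injective (emb 𝔽 i (nsz := nsz)) := by
  intro u v h
  have := congrArg (proj 𝔽 i) h
  rwa [proj_emb, proj_emb] at this

lemma emb_mem_Vnat (i : Fin d) (u : Fin (nsz i) → 𝔽) : emb 𝔽 i u ∈ Vnat 𝔽 nsz (i + 1) := by
  intro p hp
  have : p.1 ≠ i := by
    intro h; rw [h] at hp; omega
  simp [emb, this]

/-- Block triangular matrices preserve `Vnat k`. -/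
lemma mulVec_mem_Vnat {B : Matrix ((j : Fin d) × Fin (nsz j)) ((j : Fin d) × Fin (nsz j)) 𝔽}
    (hB : ∀ p q : (j : Fin d) × Fin (nsz j), q.1 < p.1 → B p q = 0)
    {k : ℕ} {v : (j : Fin d) × Fin (nsz j) → 𝔽} (hv : v ∈ Vnat 𝔽 nsz k) :
    B.mulVec v ∈ Vnat 𝔽 nsz k := by
  intro p hp
  simp only [Matrix.mulVec, dotProduct]
  apply Finset.sum_eq_zero
  intro q _
  by_cases hq : k ≤ (q.1 : ℕ)
  · rw [hv q hq, mul_zero]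
  · rw [hB p q (by omega), zero_mul]

lemma proj_mulVec {B : Matrix ((j : Fin d) × Fin (nsz j)) ((j : Fin d) × Fin (nsz j)) 𝔽}
    (hB : ∀ p q : (j : Fin d) × Fin (nsz j), q.1 < p.1 → B p q = 0)
    (i : Fin d) {v : (j : Fin d) × Fin (nsz j) → 𝔽} (hv : v ∈ Vnat 𝔽 nsz (i + 1)) :
    proj 𝔽 i (B.mulVec v) = (diagBlock i B).mulVec (proj 𝔽 i v) := by
  funext a
  simp only [proj, LinearMap.coe_mk, AddHom.coe_mk, Matrix.mulVec, dotProduct]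
  rw [← Finset.univ_sigma_univ, Finset.sum_sigma]
  rw [Finset.sum_eq_single i]
  · rfl
  · intro j _ hj
    apply Finset.sum_eq_zero
    intro b _
    rcases lt_or_gt_of_ne hj with h | h
    · rw [hB ⟨i, a⟩ ⟨j, b⟩ h, zero_mul]
    · rw [hv ⟨j, b⟩ (by simpa using h), mul_zero]
  · intro h; exact absurd (Finset.mem_univ i) h

section Filtration

variable (W : Submodule 𝔽 ((j : Fin d) × Fin (nsz j) → 𝔽))

lemma step (k : ℕ) (hk : k < d) :
    Module.finrank 𝔽 (W ⊓ Vnat 𝔽 nsz (k + 1) : Submodule 𝔽 _) =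
      Module.finrank 𝔽 (W ⊓ Vnat 𝔽 nsz k : Submodule 𝔽 _) +
      Module.finrank 𝔽 (Submodule.map (proj 𝔽 ⟨k, hk⟩) (W ⊓ Vnat 𝔽 nsz (k + 1))) := by
  set S := W ⊓ Vnat 𝔽 nsz (k + 1) with hS
  have hker : W ⊓ Vnat 𝔽 nsz k = S ⊓ LinearMap.ker (proj 𝔽 ⟨k, hk⟩) := by
    ext v
    simp only [Submodule.mem_inf, LinearMap.mem_ker]
    constructor
    · rintro ⟨hW, hV⟩
      refine ⟨⟨hW, Vnat_mono (by omega) hV⟩, ?_⟩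
      funext a
      exact hV ⟨⟨k, hk⟩, a⟩ le_rfl
    · rintro ⟨⟨hW, hV⟩, hkk⟩
      refine ⟨hW, fun p hp => ?_⟩
      rcases eq_or_lt_of_le hp with h | h
      · obtain ⟨j, b⟩ := p
        simp only at h
        obtain rfl : (⟨k, hk⟩ : Fin d) = j := Fin.ext h
        exact congrFun hkk b
      · exact hV p (by omega)
  have h1 := LinearMap.finrank_range_add_finrank_ker
    ((proj 𝔽 ⟨k, hk⟩ (nsz := nsz)).domRestrict S)
  rw [LinearMap.range_domRestrict] at h1
  have h2 : LinearMap.ker ((proj 𝔽 ⟨k, hk⟩ (nsz := nsz)).domRestrict S) =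
      Submodule.comap S.subtype (S ⊓ LinearMap.ker (proj 𝔽 ⟨k, hk⟩)) := by
    ext x
    simp [LinearMap.domRestrict]
  have h3 : Module.finrank 𝔽
      (LinearMap.ker ((proj 𝔽 ⟨k, hk⟩ (nsz := nsz)).domRestrict S)) =
      Module.finrank 𝔽 (S ⊓ LinearMap.ker (proj 𝔽 ⟨k, hk⟩) : Submodule 𝔽 _) := by
    rw [h2]
    exact (Submodule.comapSubtypeEquivOfLe inf_le_left).finrank_eq
  rw [h3] at h1
  rw [hker]
  omega

lemma finrank_eq_sum :
    Module.finrank 𝔽 W = ∑ i : Fin d,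
      Module.finrank 𝔽 (Submodule.map (proj 𝔽 i) (W ⊓ Vnat 𝔽 nsz (i + 1))) := by
  have key : ∀ m : ℕ, m ≤ d →
      Module.finrank 𝔽 (W ⊓ Vnat 𝔽 nsz m : Submodule 𝔽 _) =
        ∑ i ∈ Finset.univ.filter (fun i : Fin d => (i : ℕ) < m),
          Module.finrank 𝔽 (Submodule.map (proj 𝔽 i) (W ⊓ Vnat 𝔽 nsz (i + 1))) := by
    intro m
    induction m with
    | zero =>
      intro _
      rw [Vnat_zero, inf_bot_eq]
      simp
    | succ m ih =>
      intro hm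
      have hmd : m < d := hm
      have hfilter : Finset.univ.filter (fun i : Fin d => (i : ℕ) < m + 1) =
          insert ⟨m, hmd⟩ (Finset.univ.filter (fun i : Fin d => (i : ℕ) < m)) := by
        ext i
        simp only [Finset.mem_filter, Finset.mem_univ, true_and, Finset.mem_insert]
        constructor
        · intro h
          rcases Nat.lt_succ_iff_lt_or_eq.mp h with h | h
          · exact Or.inr (by simpa using h)
          · exact Or.inl (Fin.ext h)
        · rintro (rfl | h)
          · exact Nat.lt_succ_self m
          · omega
      rw [hfilter, Finset.sum_insert (by simp)]
      have hst := step W m hmd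
      have hih := ih (le_of_lt hmd)
      show _ = Module.finrank 𝔽
          (Submodule.map (proj 𝔽 ⟨m, hmd⟩) (W ⊓ Vnat 𝔽 nsz (m + 1))) + _
      omega
  have := key d le_rfl
  rw [Vnat_top, inf_top_eq] at this
  rw [this]
  congr 1
  ext i
  simp [i.isLt]

end Filtration

end BlockShrunkAux

open BlockShrunkAux in
/-- For a block upper-triangular matrix space `ℬ` with diagonal block spaces `𝒞ᵢ`, `ℬ` has a
shrunk subspace iff some `𝒞ᵢ` has one. -/
theorem blockTriangular_hasShrunk_iff {𝔽 : Type*} [Field 𝔽] {d : ℕ} {nsz : Fin d → ℕ}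
    (ℬ : Submodule 𝔽 (Matrix ((j : Fin d) × Fin (nsz j)) ((j : Fin d) × Fin (nsz j)) 𝔽))
    (htri : ∀ B ∈ ℬ, ∀ p q : (j : Fin d) × Fin (nsz j), q.1 < p.1 → B p q = 0) :
    HasShrunk ℬ ↔ ∃ i : Fin d, HasShrunk (Submodule.map (diagBlock i) ℬ) := by
  constructor
  · -- forward: contrapositive
    rintro ⟨U, hU⟩
    by_contra hno
    push_neg at hno
    simp only [HasShrunk, not_exists, not_lt] at hno
    set W := matImage ℬ U with hW
    -- For each i, matImage 𝒞ᵢ Uᵢ ≤ Wᵢ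
    have key : ∀ i : Fin d,
        matImage (Submodule.map (diagBlock i) ℬ)
            (Submodule.map (proj 𝔽 i) (U ⊓ Vnat 𝔽 nsz (i + 1))) ≤
          Submodule.map (proj 𝔽 i) (W ⊓ Vnat 𝔽 nsz (i + 1)) := by
      intro i
      rw [matImage, Submodule.span_le]
      rintro v ⟨C, hC, u, hu, rfl⟩
      obtain ⟨B, hB, rfl⟩ := hC
      obtain ⟨x, hx, rfl⟩ := hu
      obtain ⟨hxU, hxV⟩ := hx
      refine ⟨B.mulVec x, ⟨?_, mulVec_mem_Vnat (htri B hB) hxV⟩, ?_⟩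
      · exact Submodule.subset_span ⟨B, hB, x, hxU, rfl⟩
      · exact proj_mulVec (htri B hB) i hxV
    have hle : ∀ i : Fin d,
        Module.finrank 𝔽 (Submodule.map (proj 𝔽 i) (U ⊓ Vnat 𝔽 nsz (i + 1))) ≤
          Module.finrank 𝔽 (Submodule.map (proj 𝔽 i) (W ⊓ Vnat 𝔽 nsz (i + 1))) := by
      intro i
      exact le_trans (hno i _) (Submodule.finrank_mono (key i))
    have h1 := finrank_eq_sum U
    have h2 := finrank_eq_sum W
    rw [h1, h2] at hU
    exact absurd (Finset.sum_le_sum fun i _ => hle i) (not_le.mpr hU)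
  · -- backward
    rintro ⟨i, Ui, hUi⟩
    set 𝒞 := Submodule.map (diagBlock i (nsz := nsz)) ℬ with h𝒞
    set U : Submodule 𝔽 ((j : Fin d) × Fin (nsz j) → 𝔽) :=
      Vnat 𝔽 nsz i ⊔ Submodule.map (emb 𝔽 i) Ui with hUdef
    refine ⟨U, ?_⟩
    have hinf : ∀ V : Submodule 𝔽 (Fin (nsz i) → 𝔽),
        Vnat 𝔽 nsz i ⊓ Submodule.map (emb 𝔽 i) V = ⊥ := by
      intro V
      rw [Submodule.eq_bot_iff]
      rintro v ⟨hv1, w, _, rfl⟩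
      have : w = 0 := by
        funext a
        have h2 := congrFun (proj_emb (𝔽 := 𝔽) i w) a
        have h1 : proj 𝔽 i (emb 𝔽 i w) a = 0 := hv1 ⟨i, a⟩ le_rfl
        rw [h2] at h1
        simpa using h1
      rw [this, map_zero]
    have hrank : ∀ V : Submodule 𝔽 (Fin (nsz i) → 𝔽),
        Module.finrank 𝔽 (Vnat 𝔽 nsz i ⊔ Submodule.map (emb 𝔽 i) V : Submodule 𝔽 _) =
          Module.finrank 𝔽 (Vnat 𝔽 nsz i : Submodule 𝔽 _) + Module.finrank 𝔽 V := by
      intro V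
      have h := Submodule.finrank_sup_add_finrank_inf_eq (Vnat 𝔽 nsz i)
        (Submodule.map (emb 𝔽 i) V)
      rw [hinf V] at h
      have hVeq : Module.finrank 𝔽 (Submodule.map (emb 𝔽 i) V) = Module.finrank 𝔽 V :=
        (Submodule.equivMapOfInjective _ (emb_injective i) V).finrank_eq.symm
      simp only [finrank_bot, add_zero] at h
      rw [h, hVeq]
    -- image bound
    have himg : matImage ℬ U ≤ Vnat 𝔽 nsz i ⊔ Submodule.map (emb 𝔽 i) (matImage 𝒞 Ui) := by
      rw [matImage, Submodule.span_le]
      rintro v ⟨B, hB, u, hu, rfl⟩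
      rw [hUdef] at hu
      obtain ⟨x, hx, y, hy, rfl⟩ := Submodule.mem_sup.mp hu
      obtain ⟨w, hw, rfl⟩ := hy
      rw [Matrix.mulVec_add]
      apply Submodule.add_mem
      · exact Submodule.mem_sup_left (mulVec_mem_Vnat (htri B hB) hx)
      · -- B.mulVec (emb w) = (B.mulVec (emb w) - emb (C.mulVec w)) + emb (C.mulVec w)
        have hdecomp : B.mulVec (emb 𝔽 i w) =
            (B.mulVec (emb 𝔽 i w) - emb 𝔽 i ((diagBlock i B).mulVec w)) +
              emb 𝔽 i ((diagBlock i B).mulVec w) := by abel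
        rw [hdecomp]
        apply Submodule.add_mem
        · apply Submodule.mem_sup_left
          intro p hp
          simp only [Pi.sub_apply]
          rcases eq_or_lt_of_le hp with h | h
          · -- p.1 = i
            obtain ⟨j, b⟩ := p
            simp only at h
            obtain rfl : i = j := Fin.ext h
            have e1 : B.mulVec (emb 𝔽 i w) ⟨i, b⟩ = (diagBlock i B).mulVec w b := by
              have h5 := congrFun (proj_mulVec (htri B hB) i (emb_mem_Vnat i w)) b
              rw [proj_emb] at h5
              exact h5
            have e2 : emb 𝔽 i ((diagBlock i B).mulVec w) ⟨i, b⟩ =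
                (diagBlock i B).mulVec w b := congrFun (proj_emb i _) b
            rw [e1, e2, sub_self]
          · -- i < p.1
            have e1 : B.mulVec (emb 𝔽 i w) p = 0 :=
              mulVec_mem_Vnat (htri B hB) (emb_mem_Vnat i w) p (by omega)
            have e2 : emb 𝔽 i ((diagBlock i B).mulVec w) p = 0 :=
              emb_mem_Vnat i _ p (by omega)
            rw [e1, e2, sub_self]
        · apply Submodule.mem_sup_right
          refine ⟨(diagBlock i B).mulVec w, ?_, rfl⟩
          exact Submodule.subset_span ⟨diagBlock i B, ⟨B, hB, rfl⟩, w, hw, rfl⟩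
    calc Module.finrank 𝔽 (matImage ℬ U)
        ≤ Module.finrank 𝔽 (Vnat 𝔽 nsz i ⊔ Submodule.map (emb 𝔽 i) (matImage 𝒞 Ui) :
            Submodule 𝔽 _) := Submodule.finrank_mono himg
      _ = Module.finrank 𝔽 (Vnat 𝔽 nsz i : Submodule 𝔽 _) +
            Module.finrank 𝔽 (matImage 𝒞 Ui) := hrank _
      _ < Module.finrank 𝔽 (Vnat 𝔽 nsz i : Submodule 𝔽 _) + Module.finrank 𝔽 Ui := by omega
      _ = Module.finrank 𝔽 U := (hrank Ui).symm
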